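/- arXiv:2208.05422 — 3 statements merged into one kernel-verified Lean document; each statement's English description precedes it below -/
import Mathlib

section
/- Let K = F_q(t) with char(F_q) > 3, and fix ζ ∈ F_q^× representing a non-trivial class in F_q^×/(F_q^×)^2. Let m_1, …, m_n ∈ F_q[t] be distinct square-free polynomials, each either monic or with leading coefficient ζ. Then the square roots √m_1, …, √m_n (in a fixed separable closure of K) are linearly independent over K. -/
open scoped Classical
open MeasureTheory

noncomputable section

open Polynomial in
/-- Helper: `minpoly` of a square root not in the base field. -/
lemma minpoly_sqrt {K L : Type*} [Field K] [Field L] [Algebra K L] (v : L) (c : K)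
    (hv : v ^ 2 = algebraMap K L c) (hvr : v ∉ (algebraMap K L).range) :
    minpoly K v = X ^ 2 - C c := by
  have haev : Polynomial.aeval v (X ^ 2 - C c : K[X]) = 0 := by
    simp [hv]
  have hq : (X ^ 2 - C c : K[X]).Monic := monic_X_pow_sub_C c two_ne_zero
  have hint : IsIntegral K v := ⟨X ^ 2 - C c, hq, by simpa using haev⟩
  have hdvd : minpoly K v ∣ X ^ 2 - C c := minpoly.dvd K v haev
  have hqd : (X ^ 2 - C c : K[X]).natDegree = 2 := natDegree_X_pow_sub_C
  have hle : (minpoly K v).natDegree ≤ 2 := hqd ▸ natDegree_le_of_dvd hdvd hq.ne_zero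
  have hge : 2 ≤ (minpoly K v).natDegree := (minpoly.two_le_natDegree_iff hint).mpr hvr
  obtain ⟨e, he⟩ := hdvd
  have hm0 : minpoly K v ≠ 0 := minpoly.ne_zero hint
  have he0 : e ≠ 0 := by
    rintro rfl
    simp only [mul_zero] at he
    exact hq.ne_zero he
  have hed : e.natDegree = 0 := by
    have h := natDegree_mul hm0 he0
    rw [← he, hqd] at h
    omega
  have hec : e = C (e.coeff 0) := eq_C_of_natDegree_eq_zero hed
  have hmon : (minpoly K v).Monic := minpoly.monic hint
  have hlc : e.coeff 0 = 1 := by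
    have h := congrArg leadingCoeff he
    rw [leadingCoeff_mul, hmon.leadingCoeff, one_mul, hq.leadingCoeff] at h
    rw [hec, leadingCoeff_C] at h
    exact h.symm
  rw [he, hec, hlc, map_one, mul_one]

open Polynomial in
/-- The product of two distinct squarefree polynomials with leading coefficient `1` or a
fixed non-square `ζ` is not a square in `RatFunc Fq`. -/
lemma not_square_prod (Fq : Type) [Field Fq] (ζ : Fq) (hζ0 : ζ ≠ 0)
    (hζ : ¬ ∃ y : Fq, y ^ 2 = ζ) (a b : Polynomial Fq)
    (ha : Squarefree a) (hb : Squarefree b) (hab : a ≠ b)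
    (hla : a.leadingCoeff = 1 ∨ a.leadingCoeff = ζ)
    (hlb : b.leadingCoeff = 1 ∨ b.leadingCoeff = ζ) :
    ¬ ∃ r : RatFunc Fq, r ^ 2 = algebraMap (Polynomial Fq) (RatFunc Fq) (a * b) := by
  rintro ⟨r, hr⟩
  have hint : IsIntegral (Polynomial Fq) r := by
    refine ⟨X ^ 2 - C (a * b), monic_X_pow_sub_C _ two_ne_zero, ?_⟩
    simp [hr]
  obtain ⟨f, hf⟩ := IsIntegrallyClosed.isIntegral_iff.mp hint
  have hf2 : f ^ 2 = a * b := by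
    apply IsFractionRing.injective (Polynomial Fq) (RatFunc Fq)
    rw [map_pow, hf, hr]
  have hadvd : a ∣ f := ha.isRadical 2 f ⟨b, hf2⟩
  obtain ⟨u, hu⟩ := hadvd
  have ha0 : a ≠ 0 := ha.ne_zero
  have hbu : b = a * u ^ 2 := by
    have : a * (a * u ^ 2) = a * b := by rw [← hf2, hu]; ring
    exact (mul_left_cancel₀ ha0 this).symm
  have huu : IsUnit u := hb u ⟨a, by rw [hbu]; ring⟩
  obtain ⟨w, hwu, hwc⟩ := Polynomial.isUnit_iff.mp huu
  have hw0 : w ≠ 0 := hwu.ne_zero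
  have hbu' : b = a * C (w ^ 2) := by rw [hbu, ← hwc]; simp [pow_two, mul_comm]
  have hlc : b.leadingCoeff = a.leadingCoeff * w ^ 2 := by
    rw [hbu', leadingCoeff_mul, leadingCoeff_C]
  have hsq1 : a.leadingCoeff = b.leadingCoeff → False := by
    intro h
    have hw2 : w ^ 2 = 1 := by
      have hlc0 : a.leadingCoeff ≠ 0 := leadingCoeff_ne_zero.mpr ha0
      rw [h] at hlc
      have hb0 : b.leadingCoeff ≠ 0 := leadingCoeff_ne_zero.mpr hb.ne_zero
      nth_rewrite 1 [← mul_one b.leadingCoeff] at hlc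
      exact (mul_left_cancel₀ hb0 hlc).symm
    apply hab
    rw [hbu', hw2, map_one, mul_one]
  rcases hla with h1 | h1 <;> rcases hlb with h2 | h2
  · exact hsq1 (h1.trans h2.symm)
  · rw [h1, h2, one_mul] at hlc
    exact hζ ⟨w, hlc.symm⟩
  · rw [h1, h2] at hlc
    refine hζ ⟨w⁻¹, ?_⟩
    field_simp
    linear_combination hlc
  · exact hsq1 (h1.trans h2.symm)


variable (Fq : Type) [Field Fq] [Fintype Fq]

/-- The absolute value on `K_∞ = F_q((t⁻¹))`, realised as formal Laurent series in
`X = t⁻¹`: for `α = Σ_{i ≤ M} α_i t^i` with `α_M ≠ 0` we have `|α| = q^M = q^(-order α)`. -/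
def fabs (x : LaurentSeries Fq) : ℝ :=
  if x = 0 then 0 else (Fintype.card Fq : ℝ) ^ (-x.order : ℤ)

/-- The embedding of `O = F_q[t]` into `K_∞`, sending `t` to `X⁻¹`. -/
def polC (x : Polynomial Fq) : LaurentSeries Fq :=
  Polynomial.aeval (HahnSeries.single (-1 : ℤ) (1 : Fq)) x

/-- `|x| = q^(deg x)` for `x ∈ F_q[t]` (with `|0| = 0`). -/
def fabsP (x : Polynomial Fq) : ℝ :=
  if x = 0 then 0 else (Fintype.card Fq : ℝ) ^ x.natDegree

/-- The standard additive character `ψ(α) = e(Tr_{F_q/F_p}(α_{-1})/p)` of `K_∞`,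
where `α_{-1}` is the coefficient of `t⁻¹` in the Laurent expansion of `α`. -/
def psi (p : ℕ) [CharP Fq p] (α : LaurentSeries Fq) : ℂ :=
  letI := ZMod.algebra Fq p
  Complex.exp (2 * Real.pi * Complex.I *
    ((Algebra.trace (ZMod p) Fq (α.coeff 1)).val : ℂ) / p)

/-- Linear independence of square roots of distinct square-free polynomials
(monic or with leading coefficient a fixed non-square `ζ`) over `K = F_q(t)`,
inside a separable closure, when `char F_q > 3`. -/
theorem sqrt_linearIndependent
    (p : ℕ) [Fact p.Prime] [CharP Fq p] (hchar : 3 < p)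
    (ζ : Fq) (hζ0 : ζ ≠ 0) (hζ : ¬ ∃ y : Fq, y ^ 2 = ζ)
    (L : Type) [Field L] [Algebra (RatFunc Fq) L] [IsSepClosure (RatFunc Fq) L]
    (n : ℕ) (m : Fin n → Polynomial Fq)
    (hsf : ∀ i, Squarefree (m i))
    (hdist : Function.Injective m)
    (hlead : ∀ i, (m i).leadingCoeff = 1 ∨ (m i).leadingCoeff = ζ)
    (s : Fin n → L)
    (hs : ∀ i, s i ^ 2 = algebraMap (RatFunc Fq) L
        (algebraMap (Polynomial Fq) (RatFunc Fq) (m i))) :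
    LinearIndependent (RatFunc Fq) s := by
  open Polynomial in
  have hKL : Function.Injective (algebraMap (RatFunc Fq) L) :=
    (algebraMap (RatFunc Fq) L).injective
  have hPK : Function.Injective (algebraMap (Polynomial Fq) (RatFunc Fq)) :=
    IsFractionRing.injective _ _
  -- characteristic facts
  have h2Fq : (2 : Fq) ≠ 0 := by
    intro h
    have hd := (CharP.cast_eq_zero_iff Fq p 2).mp h
    have := Nat.le_of_dvd (by norm_num) hd
    omega
  have h2K : (2 : RatFunc Fq) ≠ 0 := by
    intro h
    apply h2Fq
    have : algebraMap (Polynomial Fq) (RatFunc Fq) (C (2 : Fq)) = 0 := by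
      rw [map_ofNat C 2, map_ofNat]; exact h
    have h0 : C (2 : Fq) = (0 : Polynomial Fq) := hPK (by simpa using this)
    simpa using congrArg (fun q => Polynomial.coeff q 0) h0
  have h2L : (2 : L) ≠ 0 := by
    intro h
    apply h2K
    apply hKL
    rw [map_ofNat, map_zero]; exact h
  -- the s i are nonzero
  have hsne : ∀ i, s i ≠ 0 := by
    intro i hz
    have h := hs i
    rw [hz] at h
    have : algebraMap (Polynomial Fq) (RatFunc Fq) (m i) = 0 := by
      apply hKL; rw [← h]; simp
    exact (hsf i).ne_zero (hPK (by simpa using this))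
  -- product of distinct m's is not a square in K
  have hA : ∀ i j, i ≠ j →
      ¬ ∃ r : RatFunc Fq, r ^ 2 = algebraMap (Polynomial Fq) (RatFunc Fq) (m i * m j) :=
    fun i j hij => not_square_prod Fq ζ hζ0 hζ (m i) (m j) (hsf i) (hsf j)
      (fun h => hij (hdist h)) (hlead i) (hlead j)
  -- Galois conjugation flipping the sign of s i * s j
  have hsigma : ∀ i j, i ≠ j →
      ∃ σ : L ≃ₐ[RatFunc Fq] L, σ (s i * s j) = -(s i * s j) := by
    intro i j hij
    set c : RatFunc Fq := algebraMap (Polynomial Fq) (RatFunc Fq) (m i * m j) with hc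
    have hu2 : (s i * s j) ^ 2 = algebraMap (RatFunc Fq) L c := by
      rw [mul_pow, hs, hs, ← map_mul, ← map_mul]
    have hur : s i * s j ∉ (algebraMap (RatFunc Fq) L).range := by
      rintro ⟨r, hr⟩
      exact hA i j hij ⟨r, hKL (by rw [map_pow, hr, hu2])⟩
    have hnur : -(s i * s j) ∉ (algebraMap (RatFunc Fq) L).range := by
      rintro ⟨r, hr⟩
      exact hur ⟨-r, by rw [map_neg, hr, neg_neg]⟩
    have hnu2 : (-(s i * s j)) ^ 2 = algebraMap (RatFunc Fq) L c := by
      rw [neg_sq]; exact hu2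
    have hmin : minpoly (RatFunc Fq) (-(s i * s j)) = X ^ 2 - C c :=
      minpoly_sqrt _ c hnu2 hnur
    have halg : IsAlgebraic (RatFunc Fq) (-(s i * s j)) := by
      refine (IsIntegral.isAlgebraic ?_)
      exact ⟨X ^ 2 - C c, monic_X_pow_sub_C _ two_ne_zero, by simp [hnu2]⟩
    have hev : Polynomial.aeval (s i * s j) (minpoly (RatFunc Fq) (-(s i * s j))) = 0 := by
      rw [hmin]; simp [hu2]
    exact minpoly.exists_algEquiv_of_root halg hev
  -- main induction on the support
  rw [linearIndependent_iff']
  suffices H : ∀ N (S : Finset (Fin n)), S.card ≤ N → ∀ g : Fin n → RatFunc Fq,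
      ∑ i ∈ S, g i • s i = 0 → ∀ i ∈ S, g i = 0 by
    intro S g hrel i hi
    exact H S.card S le_rfl g hrel i hi
  intro N
  induction N with
  | zero =>
    intro S hS g _ i hi
    rw [Nat.le_zero, Finset.card_eq_zero] at hS
    exact absurd (hS ▸ hi) (Finset.notMem_empty i)
  | succ N IH =>
    intro S hS g hrel i hi
    by_cases hz : ∃ i0 ∈ S, g i0 = 0
    · obtain ⟨i0, hi0S, hgi0⟩ := hz
      have hrel' : ∑ x ∈ S.erase i0, g x • s x = 0 := by
        rw [← Finset.add_sum_erase S _ hi0S, hgi0, zero_smul, zero_add] at hrel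
        exact hrel
      have hcard : (S.erase i0).card ≤ N := by
        have := Finset.card_erase_of_mem hi0S
        omega
      rcases eq_or_ne i i0 with rfl | hne
      · exact hgi0
      · exact IH _ hcard g hrel' i (Finset.mem_erase.mpr ⟨hne, hi⟩)
    · push_neg at hz
      exfalso
      rcases lt_or_ge S.card 2 with hc | hc
      · -- S = {i}
        have h01 : 0 < S.card := Finset.card_pos.mpr ⟨i, hi⟩
        have hS1 : S.card = 1 := by omega
        obtain ⟨a, ha⟩ := Finset.card_eq_one.mp hS1
        subst ha
        rw [Finset.sum_singleton] at hrel
        rcases smul_eq_zero.mp hrel with h | h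
        · exact hz a (Finset.mem_singleton_self a) h
        · exact hsne a h
      · obtain ⟨j, hjS, k, hkS, hjk⟩ := Finset.one_lt_card.mp hc
        obtain ⟨σ, hσ⟩ := hsigma j k hjk
        set η : Fin n → RatFunc Fq := fun i => if σ (s i) = s i then 1 else -1 with hη
        have hηs : ∀ i, σ (s i) = η i • s i := by
          intro i
          have h1 : σ (s i) * σ (s i) = s i * s i := by
            have h := congrArg σ (hs i)
            rw [map_pow, AlgEquiv.commutes] at h
            rw [← hs i] at h
            rw [← pow_two, ← pow_two (s i)]
            exact h
          rcases mul_self_eq_mul_self_iff.mp h1 with h | h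
          · simp [hη, h]
          · have hne : σ (s i) ≠ s i := by
              rw [h]
              intro hcontr
              apply hsne i
              have : (2 : L) * s i = 0 := by linear_combination -hcontr
              rcases mul_eq_zero.mp this with h' | h'
              · exact absurd h' h2L
              · exact h'
            simp only [hη, if_neg hne]
            rw [h, neg_smul, one_smul]
        have hηsq : ∀ i, η i * η i = 1 := by
          intro i
          by_cases h : σ (s i) = s i <;> simp [hη, h]
        have hjk2 : η j * η k = -1 := by
          have h1 : σ (s j * s k) = (η j * η k) • (s j * s k) := by
            rw [map_mul, hηs, hηs, smul_mul_smul_comm]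
          rw [hσ] at h1
          have hv : s j * s k ≠ 0 := mul_ne_zero (hsne j) (hsne k)
          have h2 : ((η j * η k) - (-1)) • (s j * s k) = 0 := by
            rw [sub_smul, ← h1, neg_smul, one_smul, sub_neg_eq_add, neg_add_cancel]
          rcases smul_eq_zero.mp h2 with h | h
          · exact sub_eq_zero.mp h
          · exact absurd h hv
        have hrel2 : ∑ x ∈ S, (g x * η x) • s x = 0 := by
          have h := congrArg σ hrel
          rw [map_sum, map_zero] at h
          rw [← h]
          refine Finset.sum_congr rfl fun x _ => ?_
          rw [_root_.map_smul, hηs, smul_smul]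
        have hrel3 : ∑ x ∈ S.erase j, (g x * η x - g x * η j) • s x = 0 := by
          have hsum : ∑ x ∈ S, (g x * η x - g x * η j) • s x = 0 := by
            have : ∀ x, (g x * η x - g x * η j) • s x
                = (g x * η x) • s x - η j • (g x • s x) := by
              intro x
              rw [sub_smul, smul_smul, mul_comm (η j) (g x)]
            simp_rw [this]
            rw [Finset.sum_sub_distrib, hrel2, ← Finset.smul_sum, hrel, smul_zero, sub_zero]
          rw [← Finset.add_sum_erase S _ hjS, sub_self, zero_smul, zero_add] at hsum
          exact hsum
        have hcard : (S.erase j).card ≤ N := by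
          have := Finset.card_erase_of_mem hjS
          omega
        have hk0 := IH _ hcard _ hrel3 k (Finset.mem_erase.mpr ⟨Ne.symm hjk, hkS⟩)
        have hηkj : η k = η j := by
          have hgk : g k ≠ 0 := hz k hkS
          have : g k * (η k - η j) = 0 := by linear_combination hk0
          rcases mul_eq_zero.mp this with h | h
          · exact absurd h hgk
          · exact sub_eq_zero.mp h
        rw [hηkj, hηsq j] at hjk2
        apply h2K
        linear_combination hjk2
end
end

section
/- Let K be a field of characteristic 2 and let F(x) = Σ_{i=1}^n F_i x_i^3 be a non-singular diagonal cubic form with F_i ∈ K^×. Then the dual form of F (the form whose zero locus parameterises hyperplanes c·x = 0 meeting the hypersurface F = 0 singularly) is given, up to the unit factor ∏ F_i, by F*(c) = Σ_{i=1}^n F_i^{-1} c_i^3. Equivalently: for c ∈ P^{n-1}(K̄) nonzero, there exists x ∈ P^{n-1}(K̄) with F(x) = 0, c·x = 0, and c proportional to ∇F(x), if and only if Σ_{i=1}^n F_i^{-1} c_i^3 = 0. -/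
open scoped Classical
open MeasureTheory

noncomputable section

variable (Fq : Type) [Field Fq] [Fintype Fq]

/-- In characteristic 2, for a non-singular diagonal cubic form `F(x) = Σ Fᵢ xᵢ³`,
a nonzero `c` over the algebraic closure is a zero of the dual form if and only if
the hyperplane `c·x = 0` meets `F = 0` singularly, i.e. there is a nonzero `x`
with `F(x) = 0`, `c·x = 0` and `c` proportional to `∇F(x) = (Fᵢ xᵢ²)ᵢ`;
and this happens exactly when `Σ Fᵢ⁻¹ cᵢ³ = 0`. -/
theorem dual_form_char_two
    (K : Type) [Field K] (hchar : ringChar K = 2)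
    (n : ℕ) (F : Fin n → K) (hF : ∀ i, F i ≠ 0)
    (hns : ∀ x : Fin n → AlgebraicClosure K,
        (∀ i, algebraMap K (AlgebraicClosure K) (F i) * x i ^ 2 = 0) → x = 0)
    (c : Fin n → AlgebraicClosure K) (hc : c ≠ 0) :
    (∃ x : Fin n → AlgebraicClosure K, x ≠ 0 ∧
        (∑ i, algebraMap K (AlgebraicClosure K) (F i) * x i ^ 3) = 0 ∧
        (∑ i, c i * x i) = 0 ∧
        ∃ lam : AlgebraicClosure K, ∀ i,
          c i = lam * (algebraMap K (AlgebraicClosure K) (F i) * x i ^ 2)) ↔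
      (∑ i, (algebraMap K (AlgebraicClosure K) (F i))⁻¹ * c i ^ 3) = 0 := by
  haveI : CharP K 2 := by rw [← hchar]; exact ringChar.charP K
  haveI : CharP (AlgebraicClosure K) 2 :=
    charP_of_injective_algebraMap (algebraMap K (AlgebraicClosure K)).injective 2
  have hFi : ∀ i, algebraMap K (AlgebraicClosure K) (F i) ≠ 0 := fun i h =>
    hF i ((algebraMap K (AlgebraicClosure K)).injective (by simpa using h))
  constructor
  · rintro ⟨x, hx0, hFx, hcx, lam, hlam⟩
    have key : ∀ i, (algebraMap K (AlgebraicClosure K) (F i))⁻¹ * c i ^ 3 =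
        lam ^ 3 * (algebraMap K (AlgebraicClosure K) (F i) * x i ^ 3) ^ 2 := by
      intro i
      rw [hlam i]
      field_simp [hFi i]
    calc (∑ i, (algebraMap K (AlgebraicClosure K) (F i))⁻¹ * c i ^ 3)
        = ∑ i, lam ^ 3 * (algebraMap K (AlgebraicClosure K) (F i) * x i ^ 3) ^ 2 :=
          Finset.sum_congr rfl fun i _ => key i
      _ = lam ^ 3 * ∑ i, (algebraMap K (AlgebraicClosure K) (F i) * x i ^ 3) ^ 2 := by
          rw [Finset.mul_sum]
      _ = lam ^ 3 * (∑ i, algebraMap K (AlgebraicClosure K) (F i) * x i ^ 3) ^ 2 := by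
          rw [sum_pow_char]
      _ = 0 := by rw [hFx]; ring
  · intro hsum
    choose x hx using fun i =>
      IsAlgClosed.exists_pow_nat_eq (k := AlgebraicClosure K)
        (c i * (algebraMap K (AlgebraicClosure K) (F i))⁻¹) (n := 2) (by norm_num)
    have hci : ∀ i, c i = algebraMap K (AlgebraicClosure K) (F i) * x i ^ 2 := by
      intro i
      rw [hx i]
      field_simp [hFi i]
    have hFsq : (∑ i, algebraMap K (AlgebraicClosure K) (F i) * x i ^ 3) ^ 2 = 0 := by
      rw [sum_pow_char, ← hsum]
      refine Finset.sum_congr rfl fun i _ => ?_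
      rw [hci i]
      field_simp [hFi i]
    have hFx : (∑ i, algebraMap K (AlgebraicClosure K) (F i) * x i ^ 3) = 0 :=
      pow_eq_zero_iff (n := 2) (by norm_num) |>.mp hFsq
    refine ⟨x, ?_, hFx, ?_, 1, fun i => by rw [one_mul]; exact hci i⟩
    · intro h
      apply hc
      funext i
      rw [hci i, congrFun h i]
      simp
    · rw [← hFx]
      refine Finset.sum_congr rfl fun i _ => ?_
      rw [hci i]; ring
end
end

section
/- (Hölder + Hua counting bound for diagonal cubics) Assume char(F_q) > 3 and let a_1, …, a_s ∈ F_q(t)^× with 2 ≤ s ≤ 6. Then for all E ≥ 1, the number of tuples e ∈ F_q[t]^s with |e| ≤ E and Σ_{i=1}^s a_i e_i^3 = 0 is O_ε(E^{2+ε}) if 2 ≤ s ≤ 4, and O_ε(E^{s−2+ε}) if 5 ≤ s ≤ 6. -/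
open scoped Classical
open MeasureTheory

noncomputable section

variable (Fq : Type) [Field Fq] [Fintype Fq]

/-! Each `eᵢ` ranges over the polynomials of degree at most `D`, where `q ^ D ≤ E`. For `s ≤ 3`, fix
all variables but one, which is then one of at most three cube roots. For `s ≥ 4`, fix all but four
variables; by Cauchy–Schwarz the four-variable count is at most the number of solutions of
`α x³ + β y³ = α x'³ + β y'³` (the fourth moment in Hua's lemma). If `y³ = y'³` then `x³ = x'³`.
Otherwise `n = x³ - x'³ ≠ 0` is fixed by `(y, y')`, `x - x'` divides `n`, and `x - x'` leaves at
most two choices of `x` (a quadratic with leading coefficient `3 (x - x')`, whence `char ≠ 3`). The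
divisor bound `d(n) ≪_ε q ^ (ε deg n)` then gives `O_ε(E ^ (2 + ε))` such solutions. -/

open Polynomial Finset

section Roots

variable {R : Type*} [CommRing R] [IsDomain R]

theorem card_filter_isRoot_le (T : Finset R) {p : R[X]} (hp : p ≠ 0) :
    #{x ∈ T | p.IsRoot x} ≤ p.natDegree := by
  calc #{x ∈ T | p.IsRoot x} ≤ #p.roots.toFinset :=
        card_le_card fun x hx => by simp_all
    _ ≤ p.natDegree := (Multiset.toFinset_card_le _).trans (card_roots' p)

theorem card_filter_pow_eq_le (T : Finset R) {n : ℕ} (hn : 0 < n) (w : R) :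
    #{x ∈ T | x ^ n = w} ≤ n := by
  classical
  calc #{x ∈ T | x ^ n = w} ≤ #(nthRoots n w).toFinset :=
        card_le_card fun x hx => by simp_all [mem_nthRoots hn]
    _ ≤ n := (Multiset.toFinset_card_le _).trans (card_nthRoots n w)

theorem card_filter_cube_eq_cube_le (P : Finset R) :
    #{z ∈ P ×ˢ P | z.1 ^ 3 = z.2 ^ 3} ≤ 3 * #P := by
  refine card_le_mul_card_image_of_maps_to (f := Prod.fst) (fun z hz => ?_) 3 fun x _ => ?_
  · exact (mem_product.1 (mem_filter.1 hz).1).1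
  · calc #{z ∈ {z ∈ P ×ˢ P | z.1 ^ 3 = z.2 ^ 3} | z.1 = x}
          ≤ #{y ∈ P | y ^ 3 = x ^ 3} := by
            refine card_le_card_of_injOn Prod.snd (fun z hz => ?_) fun z hz z' hz' h => ?_
            · simp only [mem_coe, mem_filter, mem_product] at hz ⊢
              exact ⟨hz.1.1.2, hz.2 ▸ hz.1.2.symm⟩
            · simp only [mem_coe, mem_filter] at hz hz'
              exact Prod.ext (hz.2.trans hz'.2.symm) h
      _ ≤ 3 := card_filter_pow_eq_le _ three_pos _

/-- Writing `x' = x - u`, the equation `x ^ 3 - x' ^ 3 = n` is a quadratic in `x` with leading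
coefficient `3 u`, and `u ∣ n`. -/
theorem card_filter_cube_sub_cube_eq_le (h3 : (3 : R) ≠ 0) (P : Finset R) {n : R} (hn : n ≠ 0)
    {Λ : ℕ} (hΛ : ∀ T : Finset R, (∀ d ∈ T, d ∣ n) → #T ≤ Λ) :
    #{z ∈ P ×ˢ P | z.1 ^ 3 - z.2 ^ 3 = n} ≤ 2 * Λ := by
  set S := {z ∈ P ×ˢ P | z.1 ^ 3 - z.2 ^ 3 = n}
  have hS : ∀ z ∈ S, z.1 ^ 3 - z.2 ^ 3 = n := fun z hz => (mem_filter.1 hz).2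
  refine (card_le_mul_card_image S (f := fun z => z.1 - z.2) 2 fun u hu => ?_).trans
    (Nat.mul_le_mul_left 2 (hΛ _ fun d hd => ?_))
  · have hu0 : u ≠ 0 := by
      obtain ⟨z, hz, rfl⟩ := mem_image.1 hu
      intro h
      apply hn
      rw [← hS z hz, sub_eq_zero.1 h, sub_self]
    set q : R[X] := C (3 * u) * X ^ 2 + C (-(3 * u ^ 2)) * X + C (u ^ 3 - n)
    have hq : q.natDegree = 2 := natDegree_quadratic (mul_ne_zero h3 hu0)
    calc #{z ∈ S | z.1 - z.2 = u} ≤ #{x ∈ P | q.IsRoot x} := by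
          refine card_le_card_of_injOn Prod.fst (fun z hz => ?_) fun z hz z' hz' h => ?_
          · simp only [mem_coe, mem_filter] at hz ⊢
            obtain ⟨hzS, rfl⟩ := hz
            refine ⟨(mem_product.1 (mem_filter.1 hzS).1).1, ?_⟩
            simp only [q, IsRoot, eval_add, eval_mul, eval_C, eval_pow, eval_X, ← hS z hzS]
            ring
          · simp only [mem_coe, mem_filter] at hz hz'
            refine Prod.ext h ?_
            linear_combination h - hz.2 + hz'.2
      _ ≤ 2 := hq ▸ card_filter_isRoot_le P (ne_zero_of_natDegree_gt (hq ▸ two_pos))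
  · obtain ⟨z, hz, rfl⟩ := mem_image.1 hd
    exact hS z hz ▸ sub_dvd_pow_sub_pow _ _ 3

end Roots

section Collisions

variable {ι κ G : Type*}

def collisionCount (S : Finset ι) (f : ι → G) : ℕ := #{z ∈ S ×ˢ S | f z.1 = f z.2}

theorem collisionCount_eq_sum_sq (S : Finset ι) (f : ι → G) {U : Finset G}
    (hU : ∀ i ∈ S, f i ∈ U) : collisionCount S f = ∑ v ∈ U, #{i ∈ S | f i = v} ^ 2 := by
  rw [collisionCount, card_eq_sum_card_fiberwise (f := fun z => f z.1)
    fun z hz => hU _ (mem_product.1 (mem_filter.1 hz).1).1]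
  refine sum_congr rfl fun v _ => ?_
  rw [sq, ← card_product]
  congr 1
  ext z
  simp only [mem_filter, mem_product]
  constructor
  · rintro ⟨⟨⟨h1, h2⟩, h⟩, rfl⟩
    exact ⟨⟨h1, rfl⟩, h2, h.symm⟩
  · rintro ⟨⟨h1, rfl⟩, h2, h⟩
    exact ⟨⟨⟨h1, h2⟩, h.symm⟩, rfl⟩

/-- The number of representations `c = f i + g j` is `∑ᵥ r_f(v) r_g(c - v)`; bound each term by
`(r_f(v) ^ 2 + r_g(c - v) ^ 2) / 2`. -/
theorem two_mul_card_filter_add_eq_le [AddCommGroup G] (S : Finset ι) (T : Finset κ)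
    (f : ι → G) (g : κ → G) (c : G) :
    2 * #{z ∈ S ×ˢ T | f z.1 + g z.2 = c} ≤ collisionCount S f + collisionCount T g := by
  set U := S.image f ∪ (T.image g).image (c - ·)
  have hrep : #{z ∈ S ×ˢ T | f z.1 + g z.2 = c} =
      ∑ v ∈ U, #{i ∈ S | f i = v} * #{j ∈ T | g j = c - v} := by
    rw [card_eq_sum_card_fiberwise (f := fun z => f z.1) fun z hz =>
      mem_union_left _ (mem_image_of_mem f (mem_product.1 (mem_filter.1 hz).1).1)]
    refine sum_congr rfl fun v _ => ?_
    rw [← card_product]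
    congr 1
    ext z
    simp only [mem_filter, mem_product]
    constructor
    · rintro ⟨⟨⟨h1, h2⟩, h⟩, rfl⟩
      exact ⟨⟨h1, rfl⟩, h2, eq_sub_of_add_eq' h⟩
    · rintro ⟨⟨h1, rfl⟩, h2, h⟩
      exact ⟨⟨⟨h1, h2⟩, by rw [h, add_sub_cancel]⟩, rfl⟩
  have hg : collisionCount T g = ∑ v ∈ U, #{j ∈ T | g j = c - v} ^ 2 := by
    rw [collisionCount_eq_sum_sq T g (U := U.image (c - ·)) fun j hj =>
        mem_image.2 ⟨c - g j, mem_union_right _ (mem_image_of_mem _ (mem_image_of_mem g hj)),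
          sub_sub_cancel c (g j)⟩,
      sum_image fun _ _ _ _ h => sub_right_injective h]
  rw [hrep, hg, collisionCount_eq_sum_sq S f fun i hi => mem_union_left _ (mem_image_of_mem f hi),
    mul_sum, ← sum_add_distrib]
  exact sum_le_sum fun v _ => (mul_assoc 2 _ _).symm.trans_le (two_mul_le_add_sq _ _)

end Collisions

section CubicForms

variable {R K : Type*} [CommRing R] [Field K] [Algebra R K]

def cubicSolutions {s : ℕ} (P : Finset R) (a : Fin s → K) (c : K) : Finset (Fin s → R) :=
  {e ∈ Fintype.piFinset fun _ => P | ∑ i, a i * algebraMap R K (e i) ^ 3 = c}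

theorem mem_cubicSolutions {s : ℕ} {P : Finset R} {a : Fin s → K} {c : K} {e : Fin s → R} :
    e ∈ cubicSolutions P a c ↔ (∀ i, e i ∈ P) ∧ ∑ i, a i * algebraMap R K (e i) ^ 3 = c := by
  rw [cubicSolutions, mem_filter, Fintype.mem_piFinset]

def binaryCubic (α β : K) (p : R × R) : K := α * algebraMap R K p.1 ^ 3 + β * algebraMap R K p.2 ^ 3

def CubeDiffDivisorBound (P : Finset R) (Λ : ℕ) : Prop :=
  ∀ x ∈ P, ∀ y ∈ P, x ^ 3 ≠ y ^ 3 → ∀ T : Finset R, (∀ d ∈ T, d ∣ x ^ 3 - y ^ 3) → #T ≤ Λ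

theorem card_cubicSolutions_succ_le {s : ℕ} (P : Finset R) (a : Fin (s + 1) → K) {M : ℕ}
    (hM : ∀ c, #(cubicSolutions P (Fin.tail a) c) ≤ M) (c : K) :
    #(cubicSolutions P a c) ≤ #P * M := by
  rw [mul_comm]
  refine card_le_mul_card_image_of_maps_to (f := fun e => e 0)
    (fun e he => (mem_cubicSolutions.1 he).1 0) M fun x _ => ?_
  refine (card_le_card_of_injOn Fin.tail (fun e he => ?_) fun e he e' he' h => ?_).trans
    (hM (c - a 0 * algebraMap R K x ^ 3))
  · simp only [mem_coe, mem_filter, mem_cubicSolutions, Fin.sum_univ_succ] at he ⊢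
    obtain ⟨⟨hP, hsum⟩, rfl⟩ := he
    exact ⟨fun i => hP i.succ, eq_sub_of_add_eq' hsum⟩
  · simp only [mem_coe, mem_filter] at he he'
    rw [← Fin.cons_self_tail e, ← Fin.cons_self_tail e', he.2, he'.2, h]

theorem card_cubicSolutions_le_pow_mul (P : Finset R) {m M : ℕ}
    (hM : ∀ b : Fin m → K, (∀ i, b i ≠ 0) → ∀ c, #(cubicSolutions P b c) ≤ M)
    {n : ℕ} (hmn : m ≤ n) {a : Fin n → K} (ha : ∀ i, a i ≠ 0) (c : K) :
    #(cubicSolutions P a c) ≤ #P ^ (n - m) * M := by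
  induction n, hmn using Nat.le_induction generalizing c with
  | base => simpa using hM a ha c
  | succ n hmn ih =>
    refine (card_cubicSolutions_succ_le P a (fun c => ih (fun i => ha i.succ) c) c).trans_eq ?_
    rw [Nat.succ_sub hmn, pow_succ]
    ring

variable [FaithfulSMul R K]

theorem card_cubicSolutions_one_le (P : Finset R) {a : Fin 1 → K} (ha : a 0 ≠ 0) (c : K) :
    #(cubicSolutions P a c) ≤ 3 := by
  have hinj := FaithfulSMul.algebraMap_injective R K
  calc #(cubicSolutions P a c) ≤ #{x ∈ P.image (algebraMap R K) | x ^ 3 = c / a 0} := by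
        refine card_le_card_of_injOn (fun e => algebraMap R K (e 0)) (fun e he => ?_)
          fun e _ e' _ h => funext fun i => Fin.fin_one_eq_zero i ▸ hinj h
        rw [mem_coe, mem_cubicSolutions, Fin.sum_univ_one] at he
        exact mem_filter.2 ⟨mem_image_of_mem _ (he.1 0), by rw [← he.2, mul_div_cancel_left₀ _ ha]⟩
    _ ≤ 3 := card_filter_pow_eq_le _ three_pos _

variable [IsDomain R]

theorem card_filter_algebraMap_cube_sub_cube_eq_le (h3 : (3 : R) ≠ 0) (P : Finset R) {Λ : ℕ}
    (hΛ : CubeDiffDivisorBound P Λ) (w : K) :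
    #{z ∈ P ×ˢ P | algebraMap R K (z.1 ^ 3 - z.2 ^ 3) = w} ≤ if w = 0 then 3 * #P else 2 * Λ := by
  have hinj := FaithfulSMul.algebraMap_injective R K
  split_ifs with hw
  · simp only [hw, map_eq_zero_iff _ hinj, sub_eq_zero]
    exact card_filter_cube_eq_cube_le P
  rcases eq_empty_or_nonempty {z ∈ P ×ˢ P | algebraMap R K (z.1 ^ 3 - z.2 ^ 3) = w} with
    h | ⟨z₀, hz₀⟩
  · rw [h, card_empty]
    exact Nat.zero_le _
  obtain ⟨hz₀P, rfl⟩ := mem_filter.1 hz₀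
  obtain ⟨hx₀, hy₀⟩ := mem_product.1 hz₀P
  have hn : z₀.1 ^ 3 - z₀.2 ^ 3 ≠ 0 := fun h => hw (by rw [h, map_zero])
  simp only [hinj.eq_iff]
  exact card_filter_cube_sub_cube_eq_le h3 P hn (hΛ _ hx₀ _ hy₀ (sub_ne_zero.1 hn))

theorem card_filter_binaryCubic_eq_le (h3 : (3 : R) ≠ 0) (P : Finset R) {α β : K} (hα : α ≠ 0)
    (hβ : β ≠ 0) {Λ : ℕ} (hΛ : CubeDiffDivisorBound P Λ) (y y' : R) :
    #{x ∈ P ×ˢ P | binaryCubic α β (x.1, y) = binaryCubic α β (x.2, y')}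
      ≤ if y ^ 3 = y' ^ 3 then 3 * #P else 2 * Λ := by
  have hinj := FaithfulSMul.algebraMap_injective R K
  set w := β / α * algebraMap R K (y' ^ 3 - y ^ 3)
  have hw : w = 0 ↔ y ^ 3 = y' ^ 3 := by
    rw [mul_eq_zero, div_eq_zero_iff, map_eq_zero_iff _ hinj, sub_eq_zero, eq_comm (a := y' ^ 3)]
    simp only [hα, hβ, false_or]
  calc _ = #{x ∈ P ×ˢ P | algebraMap R K (x.1 ^ 3 - x.2 ^ 3) = w} := by
        refine congrArg card (filter_congr fun x _ => ?_)
        simp only [binaryCubic, w, map_sub, map_pow]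
        rw [div_mul_eq_mul_div, eq_div_iff hα]
        constructor <;> intro h <;> linear_combination h
    _ ≤ if w = 0 then 3 * #P else 2 * Λ := card_filter_algebraMap_cube_sub_cube_eq_le h3 P hΛ w
    _ = _ := if_congr hw rfl rfl

/-- Split the solutions of `α x³ + β y³ = α x'³ + β y'³` according to `(y, y')`: at most `3 #P`
pairs have `y³ = y'³`. -/
theorem collisionCount_binaryCubic_le (h3 : (3 : R) ≠ 0) (P : Finset R) {α β : K}
    (hα : α ≠ 0) (hβ : β ≠ 0) {Λ : ℕ} (hΛ : CubeDiffDivisorBound P Λ) :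
    collisionCount (P ×ˢ P) (binaryCubic α β) ≤ (9 + 2 * Λ) * #P ^ 2 := by
  have hfiber : ∀ y ∈ P ×ˢ P,
      #{z ∈ {z ∈ (P ×ˢ P) ×ˢ (P ×ˢ P) | binaryCubic α β z.1 = binaryCubic α β z.2} |
        (z.1.2, z.2.2) = y} ≤ (if y.1 ^ 3 = y.2 ^ 3 then 3 * #P else 0) + 2 * Λ := by
    intro y _
    calc _ ≤ #{x ∈ P ×ˢ P | binaryCubic α β (x.1, y.1) = binaryCubic α β (x.2, y.2)} := by
          refine card_le_card_of_injOn (fun z => (z.1.1, z.2.1)) (fun z hz => ?_)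
            fun z hz z' hz' h => ?_
          · simp only [mem_coe, mem_filter, mem_product] at hz ⊢
            obtain ⟨⟨⟨⟨hx, -⟩, hx', -⟩, heq⟩, rfl⟩ := hz
            exact ⟨⟨hx, hx'⟩, heq⟩
          · simp only [mem_coe, mem_filter, Prod.mk.injEq] at hz hz' h
            obtain ⟨hy1, hy2⟩ := Prod.ext_iff.1 (hz.2.trans hz'.2.symm)
            exact Prod.ext (Prod.ext h.1 hy1) (Prod.ext h.2 hy2)
      _ ≤ if y.1 ^ 3 = y.2 ^ 3 then 3 * #P else 2 * Λ :=
          card_filter_binaryCubic_eq_le h3 P hα hβ hΛ y.1 y.2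
      _ ≤ _ := by split_ifs <;> omega
  calc _ ≤ ∑ y ∈ P ×ˢ P, ((if y.1 ^ 3 = y.2 ^ 3 then 3 * #P else 0) + 2 * Λ) := by
        rw [collisionCount, card_eq_sum_card_fiberwise (f := fun z => (z.1.2, z.2.2)) fun z hz => by
          simp only [mem_coe, mem_filter, mem_product] at hz
          exact mem_product.2 ⟨hz.1.1.2, hz.1.2.2⟩]
        exact sum_le_sum hfiber
    _ = 3 * #P * #{y ∈ P ×ˢ P | y.1 ^ 3 = y.2 ^ 3} + 2 * Λ * #P ^ 2 := by
        rw [sum_add_distrib, ← sum_filter, sum_const, sum_const, card_product, smul_eq_mul,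
          smul_eq_mul]
        ring
    _ ≤ 3 * #P * (3 * #P) + 2 * Λ * #P ^ 2 := by
        gcongr
        exact card_filter_cube_eq_cube_le P
    _ = (9 + 2 * Λ) * #P ^ 2 := by ring

theorem card_cubicSolutions_four_le (h3 : (3 : R) ≠ 0) (P : Finset R) {a : Fin 4 → K}
    (ha : ∀ i, a i ≠ 0) {Λ : ℕ}
    (hΛ : CubeDiffDivisorBound P Λ) (c : K) :
    #(cubicSolutions P a c) ≤ (9 + 2 * Λ) * #P ^ 2 := by
  have hpairs : #(cubicSolutions P a c) ≤
      #{z ∈ (P ×ˢ P) ×ˢ (P ×ˢ P) |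
        binaryCubic (a 0) (a 1) z.1 + binaryCubic (a 2) (a 3) z.2 = c} := by
    refine card_le_card_of_injOn (fun e => ((e 0, e 1), (e 2, e 3))) (fun e he => ?_)
      fun e _ e' _ h => ?_
    · rw [mem_coe, mem_cubicSolutions, Fin.sum_univ_four] at he
      rw [mem_coe, mem_filter]
      exact ⟨mem_product.2 ⟨mem_product.2 ⟨he.1 0, he.1 1⟩, mem_product.2 ⟨he.1 2, he.1 3⟩⟩,
        by rw [← he.2, binaryCubic, binaryCubic]; ring⟩
    · simp only [Prod.mk.injEq] at h
      funext i
      fin_cases i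
      exacts [h.1.1, h.1.2, h.2.1, h.2.2]
  have h01 := collisionCount_binaryCubic_le h3 P (ha 0) (ha 1) hΛ
  have h23 := collisionCount_binaryCubic_le h3 P (ha 2) (ha 3) hΛ
  have := two_mul_card_filter_add_eq_le (P ×ˢ P) (P ×ˢ P) (binaryCubic (a 0) (a 1))
    (binaryCubic (a 2) (a 3)) c
  omega

theorem card_cubicSolutions_le (h3 : (3 : R) ≠ 0) {P : Finset R} (hP : P.Nonempty) {Λ : ℕ}
    (hΛ : CubeDiffDivisorBound P Λ)
    {s : ℕ} (hs : 1 ≤ s) {a : Fin s → K} (ha : ∀ i, a i ≠ 0) (c : K) :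
    #(cubicSolutions P a c) ≤ (9 + 2 * Λ) * #P ^ max 2 (s - 2) := by
  have hP1 : 1 ≤ #P := card_pos.2 hP
  rcases le_or_gt s 3 with hs3 | hs4
  · calc #(cubicSolutions P a c) ≤ #P ^ (s - 1) * 3 :=
          card_cubicSolutions_le_pow_mul P (fun b hb => card_cubicSolutions_one_le P (hb 0)) hs ha c
      _ ≤ #P ^ max 2 (s - 2) * 9 :=
          Nat.mul_le_mul (Nat.pow_le_pow_right hP1 (by omega)) (by norm_num)
      _ ≤ (9 + 2 * Λ) * #P ^ max 2 (s - 2) := by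
          rw [mul_comm]
          exact Nat.mul_le_mul_right _ (by omega)
  · calc #(cubicSolutions P a c) ≤ #P ^ (s - 4) * ((9 + 2 * Λ) * #P ^ 2) :=
          card_cubicSolutions_le_pow_mul P (fun b hb => card_cubicSolutions_four_le h3 P hb hΛ)
            (by omega) ha c
      _ = (9 + 2 * Λ) * #P ^ max 2 (s - 2) := by
          rw [max_eq_right (by omega), show s - 2 = s - 4 + 2 by omega, pow_add]
          ring

end CubicForms

section PolynomialsOverFiniteRings

variable {R : Type*} [Semiring R] [Fintype R]

variable (R) in
def polysNatDegreeLE (D : ℕ) : Finset R[X] :=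
  univ.map ((degreeLTEquiv R (D + 1)).symm.toEquiv.toEmbedding.trans (Function.Embedding.subtype _))

theorem mem_polysNatDegreeLE {D : ℕ} {f : R[X]} : f ∈ polysNatDegreeLE R D ↔ f.natDegree ≤ D := by
  rw [natDegree_le_iff_degree_le, ← mem_degreeLE, ← degreeLT_succ_eq_degreeLE]
  simp only [polysNatDegreeLE, mem_map, mem_univ, true_and, Function.Embedding.trans_apply,
    Equiv.coe_toEmbedding, LinearEquiv.coe_toEquiv, Function.Embedding.coe_subtype]
  constructor
  · rintro ⟨c, rfl⟩
    exact Submodule.coe_mem _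
  · intro hf
    exact ⟨degreeLTEquiv R (D + 1) ⟨f, hf⟩, by simp⟩

theorem card_polysNatDegreeLE (D : ℕ) : #(polysNatDegreeLE R D) = Fintype.card R ^ (D + 1) := by
  simp [polysNatDegreeLE]

end PolynomialsOverFiniteRings

theorem Polynomial.eq_of_associated_of_leadingCoeff_eq {R : Type*} [CommRing R] [IsDomain R]
    {p q : R[X]} (hp : p ≠ 0) (h : Associated p q) (hl : p.leadingCoeff = q.leadingCoeff) :
    p = q := by
  obtain ⟨u, rfl⟩ := h
  obtain ⟨r, -, hr⟩ := Polynomial.isUnit_iff.1 u.isUnit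
  rw [← hr, leadingCoeff_mul, leadingCoeff_C] at hl
  rw [← hr, (mul_eq_left₀ (leadingCoeff_ne_zero.2 hp)).1 hl.symm, C_1, mul_one]

open UniqueFactorizationMonoid

/-- A divisor of `n` is determined by its leading coefficient and its normalized factors, which
form a sub-multiset of those of `n`. -/
theorem card_le_card_mul_prod_count_add_one_of_forall_dvd {n : Fq[X]} (hn : n ≠ 0)
    {T : Finset Fq[X]} (hT : ∀ d ∈ T, d ∣ n) :
    #T ≤ Fintype.card Fq *
      ∏ p ∈ (normalizedFactors n).toFinset, ((normalizedFactors n).count p + 1) := by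
  have hne : ∀ d ∈ T, d ≠ 0 := fun d hd h => hn (zero_dvd_iff.1 (h ▸ hT d hd))
  rw [← Multiset.card_Iic, ← card_univ, ← card_product]
  refine card_le_card_of_injOn (fun d => (d.leadingCoeff, normalizedFactors d)) (fun d hd => ?_)
    fun d hd d' hd' h => ?_
  · exact mem_product.2 ⟨mem_univ _, mem_Iic.2
      ((dvd_iff_normalizedFactors_le_normalizedFactors (hne d hd) hn).1 (hT d hd))⟩
  · simp only [Prod.mk.injEq] at h
    refine eq_of_associated_of_leadingCoeff_eq (hne d hd) ?_ h.1
    exact (prod_normalizedFactors (hne d hd)).symm.trans (h.2 ▸ prod_normalizedFactors (hne d' hd'))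

theorem sum_count_mul_natDegree_normalizedFactors {K : Type*} [Field K] {n : K[X]} (hn : n ≠ 0) :
    ∑ p ∈ (normalizedFactors n).toFinset, (normalizedFactors n).count p * p.natDegree =
      n.natDegree := by
  rw [← natDegree_eq_of_degree_eq (degree_eq_degree_of_associated (prod_normalizedFactors hn)),
    natDegree_multiset_prod _ (zero_notMem_normalizedFactors n), Finset.sum_multiset_map_count]
  simp only [smul_eq_mul]

theorem natCast_add_one_le_pow (c : ℕ) {y : ℝ} (hy : 2 ≤ y) : (c : ℝ) + 1 ≤ y ^ c := by
  calc (c : ℝ) + 1 = 1 + c * 1 := by ring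
    _ ≤ (1 + 1) ^ c := one_add_mul_le_pow (by norm_num) c
    _ ≤ y ^ c := pow_le_pow_left₀ (by norm_num) (by linarith) c

theorem natCast_add_one_le_mul_pow (c : ℕ) {y : ℝ} (hy : 1 < y) :
    (c : ℝ) + 1 ≤ (1 + (Real.log y)⁻¹) * y ^ c := by
  have hL : 0 < Real.log y := Real.log_pos hy
  have hexp : c * Real.log y + 1 ≤ y ^ c := by
    rw [← Real.rpow_natCast, Real.rpow_def_of_pos (by linarith), mul_comm]
    exact Real.add_one_le_exp _
  calc (c : ℝ) + 1 ≤ (1 + (Real.log y)⁻¹) * (c * Real.log y + 1) := by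
        rw [add_mul, one_mul, inv_mul_eq_div, add_div, mul_div_cancel_right₀ _ hL.ne']
        have : 0 ≤ 1 / Real.log y := by positivity
        nlinarith
    _ ≤ (1 + (Real.log y)⁻¹) * y ^ c := by gcongr

theorem prod_natCast_add_one_le {ι : Type*} (S : Finset ι) (c : ι → ℕ) {y : ι → ℝ} {B : ℝ}
    (hy : ∀ i ∈ S, 1 < y i) (hB : ∀ i ∈ S, 1 + (Real.log (y i))⁻¹ ≤ B) :
    ∏ i ∈ S, ((c i : ℝ) + 1) ≤ B ^ #{i ∈ S | y i < 2} * ∏ i ∈ S, y i ^ c i := by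
  have hpoint : ∀ i ∈ S, (c i : ℝ) + 1 ≤ (if y i < 2 then B else 1) * y i ^ c i := by
    intro i hi
    split_ifs with h2
    · exact (natCast_add_one_le_mul_pow (c i) (hy i hi)).trans
        (mul_le_mul_of_nonneg_right (hB i hi) (pow_nonneg (zero_lt_one.trans (hy i hi)).le (c i)))
    · rw [one_mul]
      exact natCast_add_one_le_pow (c i) (not_lt.1 h2)
  calc ∏ i ∈ S, ((c i : ℝ) + 1) ≤ ∏ i ∈ S, (if y i < 2 then B else 1) * y i ^ c i :=
        prod_le_prod (fun i _ => by positivity) hpoint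
    _ = B ^ #{i ∈ S | y i < 2} * ∏ i ∈ S, y i ^ c i := by
        rw [prod_mul_distrib, prod_ite, prod_const, prod_const_one, mul_one]

/-- Only the finitely many irreducibles `p` with `x ^ deg p < 2` contribute to `d(n)` a factor
`count p + 1` larger than `x ^ (count p * deg p)`. -/
theorem exists_card_le_mul_pow_natDegree_of_forall_dvd {x : ℝ} (hx : 1 < x) :
    ∃ C > 0, ∀ n : Fq[X], n ≠ 0 → ∀ T : Finset Fq[X], (∀ d ∈ T, d ∣ n) →
      (#T : ℝ) ≤ C * x ^ n.natDegree := by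
  obtain ⟨K, hK⟩ := pow_unbounded_of_one_lt (2 : ℝ) hx
  have hlog : 0 < Real.log x := Real.log_pos hx
  set q := Fintype.card Fq
  set B := 1 + (Real.log x)⁻¹
  have hB : 1 ≤ B := le_add_of_nonneg_right (inv_nonneg.2 hlog.le)
  refine ⟨q * B ^ q ^ (K + 1), by positivity, fun n hn T hT => ?_⟩
  set M := normalizedFactors n
  have hdeg : ∀ p ∈ M.toFinset, 1 ≤ p.natDegree := fun p hp =>
    (irreducible_of_normalized_factor p (Multiset.mem_toFinset.1 hp)).natDegree_pos
  have hsmall : #{p ∈ M.toFinset | x ^ p.natDegree < 2} ≤ q ^ (K + 1) := by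
    rw [← card_polysNatDegreeLE]
    refine card_le_card fun p hp => mem_polysNatDegreeLE.2 ?_
    have h := (mem_filter.1 hp).2
    by_contra! hKp
    exact (lt_asymm hK (h.trans_le' (pow_le_pow_right₀ hx.le hKp.le))).elim
  have hprod : ∏ p ∈ M.toFinset, ((M.count p : ℝ) + 1) ≤ B ^ q ^ (K + 1) * x ^ n.natDegree := by
    refine (prod_natCast_add_one_le (B := B) M.toFinset M.count (fun p hp => one_lt_pow₀ hx
      (Nat.one_le_iff_ne_zero.1 (hdeg p hp))) fun p hp => ?_).trans ?_
    · rw [Real.log_pow]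
      exact add_le_add_right (inv_anti₀ hlog (le_mul_of_one_le_left hlog.le
        (Nat.one_le_cast.2 (hdeg p hp)))) 1
    · rw [← sum_count_mul_natDegree_normalizedFactors hn, ← prod_pow_eq_pow_sum]
      simp_rw [← pow_mul, mul_comm]
      gcongr
  calc (#T : ℝ) ≤ q * ∏ p ∈ M.toFinset, ((M.count p : ℝ) + 1) := by
        exact_mod_cast card_le_card_mul_prod_count_add_one_of_forall_dvd Fq hn hT
    _ ≤ q * (B ^ q ^ (K + 1) * x ^ n.natDegree) := by gcongr
    _ = q * B ^ q ^ (K + 1) * x ^ n.natDegree := by ring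

theorem Polynomial.three_ne_zero_of_three_lt_ringChar {R : Type*} [CommRing R]
    (hchar : 3 < ringChar R) : (3 : R[X]) ≠ 0 := by
  have : ((3 : ℕ) : R[X]) ≠ 0 := by
    rw [ne_eq, CharP.cast_eq_zero_iff R[X] (ringChar R)]
    exact Nat.not_dvd_of_pos_of_lt three_pos hchar
  exact_mod_cast this

/-- Take for `Λ` the divisor bound at `x = q ^ (ε / 3)`: the differences `y³ - z³` have degree at
most `3 D`, so `Λ ≪ (q ^ D) ^ ε`. -/
theorem exists_card_cubicSolutions_polysNatDegreeLE_le (hchar : 3 < ringChar Fq) {s : ℕ}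
    (hs : 1 ≤ s) {a : Fin s → RatFunc Fq} (ha : ∀ i, a i ≠ 0) {ε : ℝ} (hε : 0 < ε) :
    ∃ C > 0, ∀ D : ℕ, (#(cubicSolutions (polysNatDegreeLE Fq D) a 0) : ℝ) ≤
      C * ((Fintype.card Fq : ℝ) ^ D) ^ max 2 (s - 2) * ((Fintype.card Fq : ℝ) ^ D) ^ ε := by
  set q : ℝ := (Fintype.card Fq : ℝ)
  have hq : 1 < q := Nat.one_lt_cast.2 (Fintype.one_lt_card (α := Fq))
  set x := q ^ (ε / 3)
  have hx : 1 < x := Real.one_lt_rpow hq (by positivity)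
  obtain ⟨C₀, hC₀, hdiv⟩ := exists_card_le_mul_pow_natDegree_of_forall_dvd Fq hx
  set m := max 2 (s - 2)
  refine ⟨(9 + 2 * C₀) * q ^ m, by positivity, fun D => ?_⟩
  set P := polysNatDegreeLE Fq D
  set Λ := ⌊C₀ * x ^ (3 * D)⌋₊
  have hΛ : CubeDiffDivisorBound P Λ := by
    intro y hy z hz hne T hT
    have hdeg : (y ^ 3 - z ^ 3).natDegree ≤ 3 * D :=
      (natDegree_sub_le _ _).trans (max_le
        (natDegree_pow_le.trans (Nat.mul_le_mul_left 3 (mem_polysNatDegreeLE.1 hy)))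
        (natDegree_pow_le.trans (Nat.mul_le_mul_left 3 (mem_polysNatDegreeLE.1 hz))))
    exact Nat.le_floor ((hdiv _ (sub_ne_zero.2 hne) T hT).trans (by gcongr; exact hx.le))
  have hP : P.Nonempty := ⟨0, mem_polysNatDegreeLE.2 (natDegree_zero.trans_le (Nat.zero_le D))⟩
  have hxD : x ^ (3 * D) = (q ^ D) ^ ε := by
    rw [← Real.rpow_natCast, ← Real.rpow_natCast q, ← Real.rpow_mul (by positivity),
      ← Real.rpow_mul (by positivity)]
    push_cast
    ring_nf
  have hx1 : 1 ≤ x ^ (3 * D) := one_le_pow₀ hx.le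
  calc (#(cubicSolutions P a 0) : ℝ) ≤ (9 + 2 * Λ) * (#P : ℝ) ^ m := by
        exact_mod_cast card_cubicSolutions_le (three_ne_zero_of_three_lt_ringChar hchar) hP hΛ hs
          ha 0
    _ ≤ (9 + 2 * (C₀ * x ^ (3 * D))) * (q * q ^ D) ^ m := by
        rw [card_polysNatDegreeLE, pow_succ', Nat.cast_mul, Nat.cast_pow]
        gcongr
        exact Nat.floor_le (by positivity)
    _ ≤ (9 + 2 * C₀) * x ^ (3 * D) * (q * q ^ D) ^ m := by gcongr; nlinarith
    _ = (9 + 2 * C₀) * q ^ m * (q ^ D) ^ m * (q ^ D) ^ ε := by rw [mul_pow, hxD]; ring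

theorem exists_pow_le_forall_natDegree_le_of_fabsP_le {E : ℝ} (hE : 1 ≤ E) :
    ∃ D : ℕ, (Fintype.card Fq : ℝ) ^ D ≤ E ∧
      ∀ e : Fq[X], fabsP Fq e ≤ E → e.natDegree ≤ D := by
  have hfloor : ⌊E⌋₊ ≠ 0 := Nat.one_le_iff_ne_zero.1 ((Nat.one_le_floor_iff E).2 hE)
  refine ⟨Nat.log (Fintype.card Fq) ⌊E⌋₊, ?_, fun e he => ?_⟩
  · calc (Fintype.card Fq : ℝ) ^ Nat.log (Fintype.card Fq) ⌊E⌋₊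
        ≤ ⌊E⌋₊ := by exact_mod_cast Nat.pow_log_le_self _ hfloor
      _ ≤ E := Nat.floor_le (by linarith)
  by_cases he0 : e = 0
  · simp [he0]
  rw [fabsP, if_neg he0] at he
  exact Nat.le_log_of_pow_le Fintype.one_lt_card (Nat.le_floor (by exact_mod_cast he))

theorem hua_counting_bound
    (hchar : 3 < ringChar Fq)
    (s : ℕ) (hs1 : 2 ≤ s)
    (a : Fin s → RatFunc Fq) (ha : ∀ i, a i ≠ 0)
    (ε : ℝ) (hε : 0 < ε) :
    ∃ C : ℝ, 0 < C ∧ ∀ E : ℝ, 1 ≤ E →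
      (Nat.card {e : Fin s → Polynomial Fq //
          (∀ i, fabsP Fq (e i) ≤ E) ∧
          ∑ i, a i * (algebraMap (Polynomial Fq) (RatFunc Fq) (e i)) ^ 3 = 0} : ℝ)
        ≤ C * E ^ ((if s ≤ 4 then (2 : ℝ) else (s : ℝ) - 2) + ε) := by
  obtain ⟨C, hC, hbound⟩ :=
    exists_card_cubicSolutions_polysNatDegreeLE_le Fq hchar (by omega : 1 ≤ s) ha hε
  refine ⟨C, hC, fun E hE => ?_⟩
  obtain ⟨D, hqD, hdeg⟩ := exists_pow_le_forall_natDegree_le_of_fabsP_le Fq hE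
  have hcard : Nat.card {e : Fin s → Polynomial Fq // (∀ i, fabsP Fq (e i) ≤ E) ∧
      ∑ i, a i * (algebraMap (Polynomial Fq) (RatFunc Fq) (e i)) ^ 3 = 0} ≤
      #(cubicSolutions (polysNatDegreeLE Fq D) a 0) := by
    rw [← Nat.card_eq_finsetCard]
    exact Nat.card_le_card_of_injective (fun e => ⟨e.1, mem_cubicSolutions.2
      ⟨fun i => mem_polysNatDegreeLE.2 (hdeg _ (e.2.1 i)), e.2.2⟩⟩)
      fun e e' h => Subtype.ext (Subtype.mk.inj h)
  have hexp : (if s ≤ 4 then (2 : ℝ) else (s : ℝ) - 2) = (max 2 (s - 2) : ℕ) := by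
    split_ifs with hs4
    · rw [max_eq_left (by omega), Nat.cast_ofNat]
    · rw [max_eq_right (by omega), Nat.cast_sub (by omega), Nat.cast_ofNat]
  have hq0 : 0 ≤ (Fintype.card Fq : ℝ) ^ D := by positivity
  calc _ ≤ (#(cubicSolutions (polysNatDegreeLE Fq D) a 0) : ℝ) := by exact_mod_cast hcard
    _ ≤ C * ((Fintype.card Fq : ℝ) ^ D) ^ max 2 (s - 2) * ((Fintype.card Fq : ℝ) ^ D) ^ ε :=
        hbound D
    _ ≤ C * E ^ max 2 (s - 2) * E ^ ε := by gcongr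
    _ = C * E ^ ((if s ≤ 4 then (2 : ℝ) else (s : ℝ) - 2) + ε) := by
        rw [hexp, Real.rpow_add (by linarith), Real.rpow_natCast, mul_assoc]
end
end
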